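/- Let α > 1 and β > 0 be real numbers. Then there exists a constant C > 0 such that for all natural numbers k ≥ 1, ∑_{n=1}^∞ n^{-(α+β)} (1 - n^{-β})^k ≤ C · k^{-(α+β-1)/β}. -/

import Mathlib

/-!
Write `s = α + β`, `θ = s / β` and `x = n ^ (-β) ∈ [0, 1]`, so that the summand is
`x ^ θ (1 - x) ^ k`. Since `(1 - x) ^ k ≤ exp (-k x)` and `t ^ θ exp (-t) ≤ θ ^ θ`, every
summand is at most `θ ^ θ k ^ (-θ)`; this bound is used for the `≈ k ^ (1 / β)` terms with
`n ≤ k ^ (1 / β)`.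
Beyond that point the summand is at most `n ^ (-s)`, and comparison with `∫ x ^ (-s)` bounds
that tail by `k ^ ((1 - s) / β) / (s - 1)`. Both pieces are of order `k ^ (-(s - 1) / β)`.
-/

open Real Finset

lemma Real.rpow_mul_exp_neg_le {θ t : ℝ} (hθ : 0 < θ) (ht : 0 ≤ t) :
    t ^ θ * exp (-t) ≤ θ ^ θ := by
  have h : (t / θ) ^ θ ≤ exp t :=
    calc (t / θ) ^ θ ≤ exp (t / θ) ^ θ :=
          rpow_le_rpow (by positivity) (by linarith [add_one_le_exp (t / θ)]) hθ.le
      _ = exp t := by rw [← exp_mul, div_mul_cancel₀ _ hθ.ne']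
  rw [div_rpow ht hθ.le, div_le_iff₀ (by positivity)] at h
  rw [exp_neg, ← div_eq_mul_inv, div_le_iff₀ (exp_pos t), mul_comm]
  exact h

lemma Real.rpow_mul_one_sub_pow_le {θ x : ℝ} (hθ : 0 < θ) (hx₀ : 0 ≤ x) (hx₁ : x ≤ 1)
    {k : ℕ} (hk : 0 < k) : x ^ θ * (1 - x) ^ k ≤ θ ^ θ * (k : ℝ) ^ (-θ) := by
  have hk' : (0 : ℝ) < k := by exact_mod_cast hk
  have hexp : (1 - x) ^ k ≤ exp (-(k * x)) := by
    calc (1 - x) ^ k ≤ exp (-x) ^ k := pow_le_pow_left₀ (by linarith) (one_sub_le_exp_neg x) k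
      _ = exp (-(k * x)) := by rw [← exp_nat_mul]; ring_nf
  have hscale : x ^ θ = (k : ℝ) ^ (-θ) * (k * x) ^ θ := by
    rw [mul_rpow hk'.le hx₀, ← mul_assoc, ← rpow_add hk', neg_add_cancel, rpow_zero, one_mul]
  calc x ^ θ * (1 - x) ^ k ≤ (k : ℝ) ^ (-θ) * ((k * x) ^ θ * exp (-(k * x))) := by
        rw [hscale, mul_assoc]; gcongr
    _ ≤ (k : ℝ) ^ (-θ) * θ ^ θ := by gcongr; exact rpow_mul_exp_neg_le hθ (by positivity)
    _ = θ ^ θ * (k : ℝ) ^ (-θ) := mul_comm _ _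

lemma rpow_neg_mem_Icc {y β : ℝ} (hy : 1 ≤ y) (hβ : 0 ≤ β) : y ^ (-β) ∈ Set.Icc (0 : ℝ) 1 :=
  ⟨rpow_nonneg (by linarith) _, rpow_le_one_of_one_le_of_nonpos hy (by linarith)⟩

lemma rpow_neg_mul_one_sub_rpow_neg_pow_mem_Icc {y β : ℝ} (hy : 1 ≤ y) (hβ : 0 ≤ β) (s : ℝ)
    (k : ℕ) : y ^ (-s) * (1 - y ^ (-β)) ^ k ∈ Set.Icc 0 (y ^ (-s)) := by
  obtain ⟨hx₀, hx₁⟩ := rpow_neg_mem_Icc hy hβ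
  have hy_s : 0 ≤ y ^ (-s) := rpow_nonneg (by linarith) _
  exact ⟨mul_nonneg hy_s (pow_nonneg (by linarith) k),
    mul_le_of_le_one_right hy_s (pow_le_one₀ (by linarith) (by linarith))⟩

lemma rpow_neg_mul_one_sub_rpow_neg_pow_le {s β y : ℝ} (hs : 0 < s) (hβ : 0 < β) (hy : 1 ≤ y)
    {k : ℕ} (hk : 0 < k) :
    y ^ (-s) * (1 - y ^ (-β)) ^ k ≤ (s / β) ^ (s / β) * (k : ℝ) ^ (-(s / β)) := by
  obtain ⟨hx₀, hx₁⟩ := rpow_neg_mem_Icc hy hβ.le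
  have h := rpow_mul_one_sub_pow_le (div_pos hs hβ) hx₀ hx₁ hk
  rwa [← rpow_mul (by linarith), neg_mul, mul_div_cancel₀ _ hβ.ne'] at h

lemma tsum_rpow_neg_nat_add_le {s : ℝ} (hs : 1 < s) {N : ℕ} (hN : 0 < N) :
    ∑' i : ℕ, ((i + N + 1 : ℕ) : ℝ) ^ (-s) ≤ (N : ℝ) ^ (1 - s) / (s - 1) := by
  have hN' : (0 : ℝ) < N := by exact_mod_cast hN
  have hsum : Summable fun i : ℕ ↦ ((i + N + 1 : ℕ) : ℝ) ^ (-s) :=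
    (summable_nat_add_iff (N + 1)).2 (summable_nat_rpow.2 (by linarith))
  refine hsum.tsum_le_of_sum_range_le fun a ↦ ?_
  have hanti : AntitoneOn (fun x : ℝ ↦ x ^ (-s)) (Set.Icc N (N + a)) :=
    (antitoneOn_rpow_Ioi_of_exponent_nonpos (by linarith)).mono fun x hx ↦ hN'.trans_le hx.1
  have hint :
      ∫ x in (N : ℝ)..N + a, x ^ (-s) = ((N : ℝ) ^ (1 - s) - (N + a) ^ (1 - s)) / (s - 1) := by
    rw [integral_rpow (Or.inr ⟨by linarith, ?_⟩)]
    · rw [neg_add_eq_sub, ← neg_sub s 1, div_neg, ← neg_div, neg_sub]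
    · rw [Set.uIcc_of_le (by linarith)]
      exact fun h ↦ hN'.not_ge h.1
  calc ∑ i ∈ range a, ((i + N + 1 : ℕ) : ℝ) ^ (-s)
      = ∑ i ∈ range a, ((N : ℝ) + ↑(i + 1)) ^ (-s) := by
        refine sum_congr rfl fun i _ ↦ ?_; push_cast; ring_nf
    _ ≤ ∫ x in (N : ℝ)..N + a, x ^ (-s) := hanti.sum_le_integral
    _ ≤ (N : ℝ) ^ (1 - s) / (s - 1) := by
        rw [hint]; gcongr; linarith [rpow_nonneg (by positivity : (0 : ℝ) ≤ N + a) (1 - s)]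

lemma tsum_rpow_neg_nat_ceil_add_le {s x : ℝ} (hs : 1 < s) (hx : 0 < x) :
    ∑' i : ℕ, ((i + ⌈x⌉₊ + 1 : ℕ) : ℝ) ^ (-s) ≤ x ^ (1 - s) / (s - 1) :=
  calc ∑' i : ℕ, ((i + ⌈x⌉₊ + 1 : ℕ) : ℝ) ^ (-s) ≤ (⌈x⌉₊ : ℝ) ^ (1 - s) / (s - 1) :=
        tsum_rpow_neg_nat_add_le hs (Nat.ceil_pos.2 hx)
    _ ≤ x ^ (1 - s) / (s - 1) := by
        gcongr ?_ / _
        exact rpow_le_rpow_of_nonpos hx (Nat.le_ceil x) (by linarith)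

lemma tsum_pnat_rpow_neg_mul_one_sub_rpow_neg_pow_le {s β : ℝ} (hs : 1 < s) (hβ : 0 < β)
    {k : ℕ} (hk : 1 ≤ k) :
    ∑' n : ℕ+, (n : ℝ) ^ (-s) * (1 - (n : ℝ) ^ (-β)) ^ k ≤
      (2 * (s / β) ^ (s / β) + (s - 1)⁻¹) * (k : ℝ) ^ (-(s - 1) / β) := by
  set θ := s / β
  set g : ℕ → ℝ := fun n ↦ (n : ℝ) ^ (-s) * (1 - (n : ℝ) ^ (-β)) ^ k
  have hk' : (1 : ℝ) ≤ k := by exact_mod_cast hk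
  have hg (n : ℕ) : g (n + 1) ∈ Set.Icc 0 (((n + 1 : ℕ) : ℝ) ^ (-s)) :=
    rpow_neg_mul_one_sub_rpow_neg_pow_mem_Icc (by simp) hβ.le _ k
  have hsum_bound : Summable fun n : ℕ ↦ ((n + 1 : ℕ) : ℝ) ^ (-s) :=
    (summable_nat_add_iff 1).2 (summable_nat_rpow.2 (by linarith))
  have hsum : Summable fun n ↦ g (n + 1) :=
    .of_nonneg_of_le (fun n ↦ (hg n).1) (fun n ↦ (hg n).2) hsum_bound
  set N := ⌈(k : ℝ) ^ β⁻¹⌉₊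
  have head : ∑ i ∈ range N, g (i + 1) ≤ 2 * θ ^ θ * (k : ℝ) ^ (-(s - 1) / β) := by
    have hNk : (N : ℝ) ≤ 2 * (k : ℝ) ^ β⁻¹ :=
      Nat.ceil_le_two_mul (by linarith [one_le_rpow hk' (inv_nonneg.2 hβ.le)])
    have hexp : β⁻¹ + -θ = -(s - 1) / β := by simp only [θ]; field_simp; ring
    calc ∑ i ∈ range N, g (i + 1) ≤ N * (θ ^ θ * (k : ℝ) ^ (-θ)) := by
          simpa using sum_le_card_nsmul (range N) (fun i ↦ g (i + 1)) _ fun i _ ↦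
            rpow_neg_mul_one_sub_rpow_neg_pow_le (by linarith) hβ (by simp) hk
      _ ≤ 2 * (k : ℝ) ^ β⁻¹ * (θ ^ θ * (k : ℝ) ^ (-θ)) := by gcongr
      _ = 2 * θ ^ θ * (k : ℝ) ^ (-(s - 1) / β) := by
          rw [mul_mul_mul_comm, ← rpow_add (by positivity), hexp]
  have tail : ∑' i, g (i + N + 1) ≤ (s - 1)⁻¹ * (k : ℝ) ^ (-(s - 1) / β) := by
    calc ∑' i, g (i + N + 1) ≤ ∑' i : ℕ, ((i + N + 1 : ℕ) : ℝ) ^ (-s) :=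
          Summable.tsum_le_tsum (fun i ↦ (hg (i + N)).2) ((summable_nat_add_iff N).2 hsum)
            ((summable_nat_add_iff (f := fun n : ℕ ↦ ((n + 1 : ℕ) : ℝ) ^ (-s)) N).2 hsum_bound)
      _ ≤ ((k : ℝ) ^ β⁻¹) ^ (1 - s) / (s - 1) := tsum_rpow_neg_nat_ceil_add_le hs (by positivity)
      _ = (s - 1)⁻¹ * (k : ℝ) ^ (-(s - 1) / β) := by
          rw [← rpow_mul (by positivity), div_eq_inv_mul]; ring_nf
  calc ∑' n : ℕ+, g n = ∑ i ∈ range N, g (i + 1) + ∑' i, g (i + N + 1) := by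
        rw [tsum_pnat_eq_tsum_succ (f := g), ← hsum.sum_add_tsum_nat_add N]
    _ ≤ _ := by linarith

theorem tsum_rpow_one_sub_rpow_pow_le (α β : ℝ) (hα : 1 < α) (hβ : 0 < β) :
    ∃ C : ℝ, 0 < C ∧ ∀ k : ℕ, 1 ≤ k →
      (∑' n : ℕ+, (n : ℝ) ^ (-(α + β)) * (1 - (n : ℝ) ^ (-β)) ^ k) ≤
        C * (k : ℝ) ^ (-(α + β - 1) / β) := by
  have hs : 1 < α + β := by linarith
  have hC : 0 < 2 * ((α + β) / β) ^ ((α + β) / β) + (α + β - 1)⁻¹ :=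
    add_pos (by positivity) (inv_pos.2 (by linarith))
  exact ⟨_, hC, fun k hk ↦ tsum_pnat_rpow_neg_mul_one_sub_rpow_neg_pow_le hs hβ hk⟩
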